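/- arXiv:1412.0515 — 2 statements merged into one kernel-verified Lean document; each statement's English description precedes it below -/
import Mathlib

section
/- If G is a cubic graph (every vertex has degree 3) of order n, then the restrained double domination number satisfies γ_{2r}(G) ≥ n/2. -/
/-! Count the edges between `S` and its complement: each outside vertex sends at least `k'`
of them into `S`, while each vertex of `S` spends at least `k` of its at most `d` edges
inside `S`. Hence `k' · |V ∖ S| ≤ (d - k) · |S|`; for cubic graphs and `(1,2,1)` this reads
`|V ∖ S| ≤ |S|`. -/

open Finset

def SimpleGraph.IsKkkDomSet {V : Type*} [Fintype V] [DecidableEq V] (G : SimpleGraph V)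
    [DecidableRel G.Adj] (k k' k'' : ℕ) (S : Finset V) : Prop :=
  (∀ v ∈ S, k ≤ (G.neighborFinset v ∩ S).card) ∧
  (∀ v ∉ S, k' ≤ (G.neighborFinset v ∩ S).card ∧ k'' ≤ (G.neighborFinset v \ S).card)

noncomputable def SimpleGraph.kkkDomNum {V : Type*} [Fintype V] [DecidableEq V]
    (G : SimpleGraph V) [DecidableRel G.Adj] (k k' k'' : ℕ) : ℕ :=
  sInf {n | ∃ S : Finset V, G.IsKkkDomSet k k' k'' S ∧ S.card = n}

namespace SimpleGraph

variable {V : Type*} [Fintype V] [DecidableEq V] (G : SimpleGraph V) [DecidableRel G.Adj]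

theorem isKkkDomSet_univ {k k' k'' : ℕ} (h : ∀ v, k ≤ G.degree v) :
    G.IsKkkDomSet k k' k'' univ :=
  ⟨fun v _ => by rw [inter_univ, card_neighborFinset_eq_degree]; exact h v,
    fun v hv => absurd (mem_univ v) hv⟩

theorem exists_isKkkDomSet_card_eq_kkkDomNum {k k' k'' : ℕ}
    (hne : ∃ S, G.IsKkkDomSet k k' k'' S) :
    ∃ S, G.IsKkkDomSet k k' k'' S ∧ #S = G.kkkDomNum k k' k'' := by
  obtain ⟨S, hS⟩ := hne
  exact Nat.sInf_mem (s := {n | ∃ S, G.IsKkkDomSet k k' k'' S ∧ #S = n}) ⟨#S, S, hS, rfl⟩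

theorem neighborFinset_inter_eq_filter (v : V) (S : Finset V) :
    G.neighborFinset v ∩ S = {u ∈ S | G.Adj v u} := by
  ext u
  simp [and_comm]

variable {G}

theorem IsKkkDomSet.card_compl_mul_le {k k' k'' d : ℕ} {S : Finset V}
    (hS : G.IsKkkDomSet k k' k'' S) (hdeg : ∀ v, G.degree v ≤ d) :
    #Sᶜ * k' ≤ #S * (d - k) := by
  refine card_mul_le_card_mul G.Adj (fun v hv => ?_) (fun u hu => ?_)
  · rw [bipartiteAbove, ← neighborFinset_inter_eq_filter]
    exact (hS.2 v (mem_compl.mp hv)).1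
  · have hsplit := card_inter_add_card_sdiff (G.neighborFinset u) S
    rw [card_neighborFinset_eq_degree] at hsplit
    have hin := hS.1 u hu
    have hout : #(Sᶜ.bipartiteBelow G.Adj u) = #(G.neighborFinset u \ S) := by
      rw [bipartiteBelow, sdiff_eq_inter_compl, neighborFinset_inter_eq_filter]
      simp only [G.adj_comm]
    have hdeg_u := hdeg u
    omega

theorem card_le_two_mul_of_isKkkDomSet {S : Finset V} (hcubic : ∀ v, G.degree v = 3)
    (hS : G.IsKkkDomSet 1 2 1 S) : Fintype.card V ≤ 2 * #S := by
  have := hS.card_compl_mul_le (d := 3) (fun v => (hcubic v).le)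
  have := card_add_card_compl S
  omega

end SimpleGraph

/-- If G is a cubic graph of order n, then γ_{2r}(G) = γ_{(1,2,1)}(G) ≥ n/2. -/
theorem stmt_3 {V : Type*} [Fintype V] [DecidableEq V] (G : SimpleGraph V)
    [DecidableRel G.Adj] (hcubic : ∀ v : V, G.degree v = 3) :
    (Fintype.card V : ℝ) / 2 ≤ G.kkkDomNum 1 2 1 := by
  obtain ⟨S, hS, hcard⟩ := G.exists_isKkkDomSet_card_eq_kkkDomNum (k := 1) (k' := 2) (k'' := 1)
    ⟨univ, G.isKkkDomSet_univ fun v => by rw [hcubic]; norm_num⟩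
  have h : (Fintype.card V : ℝ) ≤ 2 * #S := mod_cast G.card_le_two_mul_of_isKkkDomSet hcubic hS
  rw [← hcard]
  linarith
end

section
/- Let k and k' be positive integers with k ≥ k', and let G be a finite simple graph of order n with minimum degree δ = δ(G) ≥ k + 2. Then γ_{(k,k',1)}(G) ≤ n − δ + k. -/
open Finset

/-!
Remove from `G` a star `T` on `δ - k` vertices, i.e. a vertex together with `δ - k - 1` of its
neighbours. A vertex outside `T` loses at most `#T = δ - k` neighbours, so keeps `k`; a vertex
of `T` loses at most `#T - 1` neighbours, so keeps `k + 1 ≥ k'`; and since `δ - k ≥ 2`, every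
vertex of the star has a neighbour inside the star. Hence `Tᶜ` is a `(k,k',1)`-dominating set of
size `n - δ + k`.
-/

namespace SimpleGraph

variable {V : Type*} [Fintype V] (G : SimpleGraph V) [DecidableRel G.Adj]

theorem minDegree_le_card_neighborFinset (v : V) : G.minDegree ≤ #(G.neighborFinset v) :=
  G.card_neighborFinset_eq_degree v ▸ G.minDegree_le_degree v

variable [DecidableEq V]

theorem kkkDomNum_le_card {k k' k'' : ℕ} {S : Finset V} (hS : G.IsKkkDomSet k k' k'' S) :
    G.kkkDomNum k k' k'' ≤ #S :=
  Nat.sInf_le ⟨S, hS, rfl⟩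

theorem minDegree_sub_card_le_card_neighborFinset_sdiff (v : V) (T : Finset V) :
    G.minDegree - #T ≤ #(G.neighborFinset v \ T) := by
  have := G.minDegree_le_card_neighborFinset v
  have := le_card_sdiff T (G.neighborFinset v)
  omega

theorem card_neighborFinset_inter_le_card_sub_one {v : V} {T : Finset V} (hv : v ∈ T) :
    #(G.neighborFinset v ∩ T) ≤ #T - 1 := by
  rw [← card_erase_of_mem hv]
  refine card_le_card fun w hw ↦ mem_erase.2 ⟨?_, (mem_inter.1 hw).2⟩
  rintro rfl
  exact G.notMem_neighborFinset_self w (mem_inter.1 hw).1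

theorem minDegree_add_one_sub_card_le_card_neighborFinset_sdiff {v : V} {T : Finset V}
    (hv : v ∈ T) : G.minDegree + 1 - #T ≤ #(G.neighborFinset v \ T) := by
  have := G.minDegree_le_card_neighborFinset v
  have := G.card_neighborFinset_inter_le_card_sub_one hv
  have := card_sdiff_add_card_inter (G.neighborFinset v) T
  have := card_pos.2 ⟨v, hv⟩
  omega

theorem isKkkDomSet_compl {k k' : ℕ} {T : Finset V} (hk : k + #T ≤ G.minDegree)
    (hk' : k' + #T ≤ G.minDegree + 1) (hT : ∀ v ∈ T, ∃ w ∈ T, G.Adj v w) :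
    G.IsKkkDomSet k k' 1 Tᶜ := by
  simp only [IsKkkDomSet, ← sdiff_eq_inter_compl, sdiff_compl, mem_compl, not_not]
  refine ⟨fun v _ ↦ ?_, fun v hv ↦ ⟨?_, ?_⟩⟩
  · have := G.minDegree_sub_card_le_card_neighborFinset_sdiff v T
    omega
  · have := G.minDegree_add_one_sub_card_le_card_neighborFinset_sdiff hv
    omega
  · obtain ⟨w, hwT, hvw⟩ := hT v hv
    exact card_pos.2 ⟨w, mem_inter.2 ⟨(G.mem_neighborFinset v w).2 hvw, hwT⟩⟩

theorem exists_card_eq_forall_exists_adj {m : ℕ} (h2 : 2 ≤ m) (hm : m ≤ G.minDegree + 1) :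
    ∃ T : Finset V, #T = m ∧ ∀ v ∈ T, ∃ w ∈ T, G.Adj v w := by
  obtain ⟨u⟩ : Nonempty V := by
    by_contra h
    rw [not_nonempty_iff] at h
    simp only [minDegree_of_subsingleton] at hm
    omega
  obtain ⟨L, hLu, hLcard⟩ : ∃ L ⊆ G.neighborFinset u, #L = m - 1 := by
    refine exists_subset_card_eq ?_
    have := G.minDegree_le_degree u
    rw [card_neighborFinset_eq_degree]
    omega
  have huL : u ∉ L := fun h ↦ G.notMem_neighborFinset_self u (hLu h)
  refine ⟨insert u L, by rw [card_insert_of_notMem huL]; omega, fun v hv ↦ ?_⟩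
  rcases mem_insert.1 hv with rfl | hvL
  · obtain ⟨w, hw⟩ := card_pos.1 (by omega : 0 < #L)
    exact ⟨w, mem_insert_of_mem hw, (G.mem_neighborFinset v w).1 (hLu hw)⟩
  · exact ⟨u, mem_insert_self u L, ((G.mem_neighborFinset u v).1 (hLu hvL)).symm⟩

end SimpleGraph

theorem stmt_9_general {V : Type*} [Fintype V] [DecidableEq V] (G : SimpleGraph V)
    [DecidableRel G.Adj] (k k' : ℕ) (hkk' : k' ≤ k)
    (hδ : k + 2 ≤ G.minDegree) :
    G.kkkDomNum k k' 1 ≤ Fintype.card V - G.minDegree + k := by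
  obtain ⟨T, hTcard, hT⟩ :=
    G.exists_card_eq_forall_exists_adj (m := G.minDegree - k) (by omega) (by omega)
  obtain ⟨u, -⟩ := card_pos.1 (by omega : 0 < #T)
  have : Nonempty V := ⟨u⟩
  have hδn := G.minDegree_lt_card
  calc G.kkkDomNum k k' 1 ≤ #Tᶜ :=
        G.kkkDomNum_le_card (G.isKkkDomSet_compl (by omega) (by omega) hT)
    _ = Fintype.card V - G.minDegree + k := by rw [card_compl, hTcard]; omega

/-- If k, k' ≥ 1 with k ≥ k' and δ(G) ≥ k + 2, then γ_{(k,k',1)}(G) ≤ n − δ + k. -/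
theorem stmt_9 {V : Type*} [Fintype V] [DecidableEq V] (G : SimpleGraph V)
    [DecidableRel G.Adj] (k k' : ℕ) (hk' : 1 ≤ k') (hkk' : k' ≤ k)
    (hδ : k + 2 ≤ G.minDegree) :
    G.kkkDomNum k k' 1 ≤ Fintype.card V - G.minDegree + k :=
  stmt_9_general G k k' hkk' hδ
end
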